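/- arXiv:1708.04836 — 3 statements merged into one kernel-verified Lean document; each statement's English description precedes it below -/
import Mathlib

section
/- Let X_1, X_2, X_3, X_4 be positive definite complex d×d matrices. Then for every t ∈ ℝ, Tr[ X_4 X_3^{(1+it)/2} X_2^{(1+it)/2} X_1 X_2^{(1−it)/2} X_3^{(1−it)/2} ] = Tr_{ℂ^d ⊗ ℂ^d}[ P_1 · (X_2 ⊗ conj(X_3))^{(1+it)/2} (X_1 ⊗ conj(X_4)) (X_2 ⊗ conj(X_3))^{(1−it)/2} ]. -/
open MeasureTheory
open scoped Kronecker

noncomputable section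

/-- Entrywise complex conjugate of a matrix (in the standard basis). -/
def mconj {ι κ : Type*} (X : Matrix ι κ ℂ) : Matrix ι κ ℂ :=
  X.map (starRingEnd ℂ)

/-- `C^b X C^b` : `X` itself if `b = 0`, and the entrywise conjugate otherwise. -/
def conjIf {ι : Type*} (b : ℕ) (X : Matrix ι ι ℂ) : Matrix ι ι ℂ :=
  if b = 0 then X else mconj X

/-- The Thue–Morse sequence `β` : `β 0 = 0`, `β (2j) = β j`, `β (2j+1) = 1 - β j`. -/
def tm : ℕ → ℕ
  | 0 => 0
  | (n + 1) => if (n + 1) % 2 = 0 then tm ((n + 1) / 2) else 1 - tm ((n + 1) / 2)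
  decreasing_by all_goals omega

/-- The (principal) logarithm of a positive definite matrix, defined through the spectral
decomposition (junk value `0` for non-Hermitian input). -/
def matLog {ι : Type*} [Fintype ι] [DecidableEq ι] (A : Matrix ι ι ℂ) : Matrix ι ι ℂ :=
  if h : A.IsHermitian then
    (h.eigenvectorUnitary : Matrix ι ι ℂ) *
      Matrix.diagonal (fun i => (Real.log (h.eigenvalues i) : ℂ)) *
      star (h.eigenvectorUnitary : Matrix ι ι ℂ)
  else 0

/-- Complex matrix powers `A ^ z` of a positive definite matrix, via the spectral
decomposition `A = Σ λ_j P_j ↦ Σ λ_j^z P_j` (junk value `0` for non-Hermitian input). -/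
def mcpow {ι : Type*} [Fintype ι] [DecidableEq ι] (A : Matrix ι ι ℂ) (z : ℂ) : Matrix ι ι ℂ :=
  if h : A.IsHermitian then
    (h.eigenvectorUnitary : Matrix ι ι ℂ) *
      Matrix.diagonal (fun i => (h.eigenvalues i : ℂ) ^ z) *
      star (h.eigenvectorUnitary : Matrix ι ι ℂ)
  else 0

/-- The matrix exponential. -/
def mexp {ι : Type*} [Fintype ι] [DecidableEq ι] (A : Matrix ι ι ℂ) : Matrix ι ι ℂ :=
  NormedSpace.exp A

/-- `T_X(Y) = ∫_0^∞ (X+τ)⁻¹ Y (X+τ)⁻¹ dτ` (entrywise Bochner integral). -/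
def Tmap {ι : Type*} [Fintype ι] [DecidableEq ι] (X Y : Matrix ι ι ℂ) : Matrix ι ι ℂ :=
  Matrix.of fun i j =>
    ∫ τ in Set.Ioi (0 : ℝ), ((X + (τ : ℂ) • 1)⁻¹ * Y * (X + (τ : ℂ) • 1)⁻¹) i j

/-- The probability density `β(t) = (π/2)(1 + cosh(π t))⁻¹`. -/
def betaD (t : ℝ) : ℝ := (Real.pi / 2) * (1 + Real.cosh (Real.pi * t))⁻¹

/-- The non-normalized maximally entangled projector `P₁ = |Ω₁⟩⟨Ω₁|`,
`Ω₁ = Σ_l e_l ⊗ e_l`, on `ℂ^d ⊗ ℂ^d`. -/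
def P1mat (d : ℕ) : Matrix (Fin d × Fin d) (Fin d × Fin d) ℂ :=
  Matrix.of fun x y => (if x.1 = x.2 then (1 : ℂ) else 0) * (if y.1 = y.2 then (1 : ℂ) else 0)

/-- Tensor (Kronecker) product of `M` single-site matrices on `(ℂ^d)^{⊗M}`. -/
def bigTensor {M d : ℕ} (B : Fin M → Matrix (Fin d) (Fin d) ℂ) :
    Matrix (Fin M → Fin d) (Fin M → Fin d) ℂ :=
  Matrix.of fun x y => ∏ i : Fin M, B i (x i) (y i)

/-- The condition that the coordinates `a, …, a+m-1` of `x` coincide with the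
coordinates `a+m, …, a+2m-1`. -/
def pairCond {M d : ℕ} (a m : ℕ) (x : Fin M → Fin d) : Prop :=
  ∀ i : ℕ, ∀ (h₁ : a + i < M) (h₂ : a + m + i < M), i < m →
    x ⟨a + i, h₁⟩ = x ⟨a + m + i, h₂⟩

open Classical in
/-- The coefficient `⟨x|Ω_m⟩` of the non-normalized maximally entangled vector `Ω_m`
placed on the `2m` coordinates starting at `a`. -/
def omInd {M d : ℕ} (a m : ℕ) (x : Fin M → Fin d) : ℂ :=
  if pairCond a m x then 1 else 0

/-- The non-normalized maximally entangled projector `P_m = |Ω_m⟩⟨Ω_m|` placed on the `2m`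
coordinates starting at `a` of `(ℂ^d)^{⊗M}` (no identity padding: to be used when `2m = M`,
or as a tensor factor via `omInd`). -/
def embProj (d M a m : ℕ) : Matrix (Fin M → Fin d) (Fin M → Fin d) ℂ :=
  Matrix.of fun x y => omInd a m x * omInd a m y

open Classical in
/-- `B ⊗ I^{⊗(M-p)}` : a matrix `B` on the first `p` factors of `(ℂ^d)^{⊗M}`, tensored with
the identity on the remaining factors. -/
def padId {d : ℕ} (p M : ℕ) (h : p ≤ M) (B : Matrix (Fin p → Fin d) (Fin p → Fin d) ℂ) :
    Matrix (Fin M → Fin d) (Fin M → Fin d) ℂ :=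
  Matrix.of fun x y =>
    B (fun i => x (Fin.castLE h i)) (fun i => y (Fin.castLE h i)) *
      (if ∀ i : Fin M, p ≤ (i : ℕ) → x i = y i then 1 else 0)

/-- Tensor product of `m` two-site matrices, on `(ℂ^d ⊗ ℂ^d)^{⊗m} ≅ (ℂ^d)^{⊗2m}` (the `j`-th
factor acting on the coordinates `2j, 2j+1`). -/
def bigTensor2 {m d : ℕ} (B : Fin m → Matrix (Fin d × Fin d) (Fin d × Fin d) ℂ) :
    Matrix (Fin (2 * m) → Fin d) (Fin (2 * m) → Fin d) ℂ :=
  Matrix.of fun x y => ∏ j : Fin m,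
    B j (x ⟨2 * (j : ℕ), by have := j.isLt; omega⟩, x ⟨2 * (j : ℕ) + 1, by have := j.isLt; omega⟩)
        (y ⟨2 * (j : ℕ), by have := j.isLt; omega⟩, y ⟨2 * (j : ℕ) + 1, by have := j.isLt; omega⟩)

/-!
For Hermitian `X` the entrywise conjugate is `Xᵀ`, and the functional calculus `mcpow`, being
independent of the chosen diagonalisation, commutes with `⊗ₖ` (for positive semidefinite
factors) and with transposition. The right-hand side therefore becomes
`Tr[P₁ (A ⊗ₖ Bᵀ)]` with `A = X₂^z X₁ X₂^z̄` and `B = X₃^z̄ X₄ X₃^z`, which equals `Tr[A B]`;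
cyclicity of the trace finishes the proof.
-/

open Matrix Polynomial Unitary
open scoped Kronecker

section SpectralFunctions

variable {n m : Type*} [Fintype n] [DecidableEq n] [Fintype m] [DecidableEq m]

theorem Matrix.aeval_diagonal {R : Type*} [CommSemiring R] (d : n → R) (p : R[X]) :
    aeval (diagonal d) p = diagonal fun i => p.eval (d i) := by
  rw [← diagonalAlgHom_apply R, aeval_algHom_apply, aeval_pi_apply]
  simp [diagonalAlgHom_apply, aeval_def, eval₂_eq_eval_map]

/-- Both sides equal `p (U D U⋆)` for a polynomial `p` interpolating `f` on the entries of `μ`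
and `ν`. -/
theorem Matrix.conj_diagonal_comp_eq_of_eq {K : Type*} [Field K] [StarRing K]
    {U V : unitary (Matrix n n K)} {μ ν : n → K}
    (h : (U : Matrix n n K) * diagonal μ * star (U : Matrix n n K) =
      V * diagonal ν * star (V : Matrix n n K)) (f : K → K) :
    (U : Matrix n n K) * diagonal (f ∘ μ) * star (U : Matrix n n K) =
      V * diagonal (f ∘ ν) * star (V : Matrix n n K) := by
  classical
  set s : Finset K := Finset.univ.image μ ∪ Finset.univ.image ν
  set p : K[X] := Lagrange.interpolate s id f
  have hp : ∀ x ∈ s, p.eval x = f x := fun x hx =>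
    Lagrange.eval_interpolate_at_node (v := id) f Function.injective_id.injOn hx
  have hfun : ∀ (W : unitary (Matrix n n K)) (κ : n → K), (∀ i, κ i ∈ s) →
      (W : Matrix n n K) * diagonal (f ∘ κ) * star (W : Matrix n n K) =
        aeval ((W : Matrix n n K) * diagonal κ * star (W : Matrix n n K)) p := by
    intro W κ hκ
    have hdiag : aeval (diagonal κ) p = diagonal (f ∘ κ) := by
      rw [aeval_diagonal]
      exact congrArg diagonal (funext fun i => hp _ (hκ i))
    rw [← conjStarAlgAut_apply (S := K) W (diagonal κ), aeval_algHom_apply, hdiag,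
      conjStarAlgAut_apply]
  rw [hfun U μ fun i => by simp [s], hfun V ν fun i => by simp [s], h]

theorem Matrix.IsHermitian.eq_eigenvectorUnitary_mul_diagonal {A : Matrix n n ℂ}
    (hA : A.IsHermitian) :
    A = (hA.eigenvectorUnitary : Matrix n n ℂ) * diagonal (fun i => (hA.eigenvalues i : ℂ)) *
      star (hA.eigenvectorUnitary : Matrix n n ℂ) :=
  hA.spectral_theorem

theorem mcpow_eq_of_decomposition {A : Matrix n n ℂ} (hA : A.IsHermitian)
    (U : unitary (Matrix n n ℂ)) (μ : n → ℝ)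
    (hdec : A = U * diagonal (fun i => (μ i : ℂ)) * star (U : Matrix n n ℂ)) (z : ℂ) :
    mcpow A z = U * diagonal (fun i => (μ i : ℂ) ^ z) * star (U : Matrix n n ℂ) := by
  rw [mcpow, dif_pos hA]
  exact conj_diagonal_comp_eq_of_eq
    (hA.eq_eigenvectorUnitary_mul_diagonal.symm.trans hdec) (· ^ z)

open ComplexOrder in
theorem mcpow_kronecker {A : Matrix n n ℂ} {B : Matrix m m ℂ} (hA : A.PosSemidef)
    (hB : B.PosSemidef) (z : ℂ) : mcpow (A ⊗ₖ B) z = mcpow A z ⊗ₖ mcpow B z := by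
  set UA : Matrix n n ℂ := (hA.1.eigenvectorUnitary : Matrix n n ℂ)
  set UB : Matrix m m ℂ := (hB.1.eigenvectorUnitary : Matrix m m ℂ)
  let U : unitary (Matrix (n × m) (n × m) ℂ) :=
    ⟨UA ⊗ₖ UB, kronecker_mem_unitary hA.1.eigenvectorUnitary.2 hB.1.eigenvectorUnitary.2⟩
  have hstar : star (U : Matrix (n × m) (n × m) ℂ) = star UA ⊗ₖ star UB :=
    conjTranspose_kronecker _ _
  have hdec : A ⊗ₖ B = (U : Matrix (n × m) (n × m) ℂ) *
      diagonal (fun p : n × m => ((hA.1.eigenvalues p.1 * hB.1.eigenvalues p.2 : ℝ) : ℂ)) *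
      star (U : Matrix (n × m) (n × m) ℂ) := by
    conv_lhs => rw [hA.1.eq_eigenvectorUnitary_mul_diagonal,
      hB.1.eq_eigenvectorUnitary_mul_diagonal]
    simp only [hstar, U, mul_kronecker_mul, diagonal_kronecker_diagonal]
    push_cast
    rfl
  rw [mcpow_eq_of_decomposition (hA.kronecker hB).1 U _ hdec, mcpow, dif_pos hA.1, mcpow,
    dif_pos hB.1, hstar, mul_kronecker_mul, mul_kronecker_mul, diagonal_kronecker_diagonal]
  congr 3
  funext p
  push_cast
  exact Complex.mul_cpow_ofReal_nonneg (hA.eigenvalues_nonneg p.1) (hB.eigenvalues_nonneg p.2) z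

theorem mcpow_transpose {A : Matrix n n ℂ} (hA : A.IsHermitian) (z : ℂ) :
    mcpow Aᵀ z = (mcpow A z)ᵀ := by
  let U : unitary (Matrix n n ℂ) := UnitaryGroup.map_star hA.eigenvectorUnitary
  have hstar : star (U : Matrix n n ℂ) = (hA.eigenvectorUnitary : Matrix n n ℂ)ᵀ := by
    ext i j; simp [U]
  have hU : (U : Matrix n n ℂ) = (star (hA.eigenvectorUnitary : Matrix n n ℂ))ᵀ := by
    ext i j; simp [U]
  have hdec :
      Aᵀ = U * diagonal (fun i => (hA.eigenvalues i : ℂ)) * star (U : Matrix n n ℂ) := by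
    conv_lhs => rw [hA.eq_eigenvectorUnitary_mul_diagonal]
    rw [hstar, hU, transpose_mul, transpose_mul, diagonal_transpose, Matrix.mul_assoc]
  rw [mcpow_eq_of_decomposition hA.transpose U _ hdec, mcpow, dif_pos hA, hstar, hU,
    transpose_mul, transpose_mul, diagonal_transpose, Matrix.mul_assoc]

end SpectralFunctions

theorem Matrix.IsHermitian.mconj_eq_transpose {n : Type*} {A : Matrix n n ℂ}
    (hA : A.IsHermitian) : mconj A = Aᵀ := by
  ext i j
  simpa [mconj] using congrFun (congrFun hA.eq j) i

theorem trace_P1mat_mul_kronecker_transpose {d : ℕ} (A B : Matrix (Fin d) (Fin d) ℂ) :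
    trace (P1mat d * (A ⊗ₖ Bᵀ)) = trace (A * B) := by
  simpa [trace, P1mat, mul_apply, Fintype.sum_prod_type, ite_mul] using Finset.sum_comm

open ComplexOrder in
theorem four_matrix_pointwise_rewriting_general {d : ℕ} (X₁ X₂ X₃ X₄ : Matrix (Fin d) (Fin d) ℂ)
    (h₂ : X₂.PosDef) (h₃ : X₃.PosDef) (h₄ : X₄.PosDef) (t : ℝ) :
    Matrix.trace (X₄ * mcpow X₃ ((1 + Complex.I * t) / 2) *
        mcpow X₂ ((1 + Complex.I * t) / 2) * X₁ * mcpow X₂ ((1 - Complex.I * t) / 2) *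
        mcpow X₃ ((1 - Complex.I * t) / 2)) =
      Matrix.trace (P1mat d * mcpow (X₂ ⊗ₖ mconj X₃) ((1 + Complex.I * t) / 2) *
        (X₁ ⊗ₖ mconj X₄) * mcpow (X₂ ⊗ₖ mconj X₃) ((1 - Complex.I * t) / 2)) := by
  have hpow (z : ℂ) : mcpow (X₂ ⊗ₖ mconj X₃) z = mcpow X₂ z ⊗ₖ (mcpow X₃ z)ᵀ := by
    rw [h₃.1.mconj_eq_transpose, mcpow_kronecker h₂.posSemidef h₃.posSemidef.transpose,
      mcpow_transpose h₃.1]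
  rw [hpow, hpow, h₄.1.mconj_eq_transpose, Matrix.mul_assoc (P1mat d * _),
    Matrix.mul_assoc (P1mat d), ← mul_kronecker_mul, ← mul_kronecker_mul, ← transpose_mul,
    ← transpose_mul, trace_P1mat_mul_kronecker_transpose, trace_mul_comm]
  conv_rhs => rw [trace_mul_comm]
  simp only [Matrix.mul_assoc]

open ComplexOrder in
/-- Pointwise (in `t`) rewriting of the four-matrix trace via the maximally entangled
projector `P₁` on `ℂ^d ⊗ ℂ^d`. -/
theorem four_matrix_pointwise_rewriting {d : ℕ} (X₁ X₂ X₃ X₄ : Matrix (Fin d) (Fin d) ℂ)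
    (h₁ : X₁.PosDef) (h₂ : X₂.PosDef) (h₃ : X₃.PosDef) (h₄ : X₄.PosDef) (t : ℝ) :
    Matrix.trace (X₄ * mcpow X₃ ((1 + Complex.I * t) / 2) *
        mcpow X₂ ((1 + Complex.I * t) / 2) * X₁ * mcpow X₂ ((1 - Complex.I * t) / 2) *
        mcpow X₃ ((1 - Complex.I * t) / 2)) =
      Matrix.trace (P1mat d * mcpow (X₂ ⊗ₖ mconj X₃) ((1 + Complex.I * t) / 2) *
        (X₁ ⊗ₖ mconj X₄) * mcpow (X₂ ⊗ₖ mconj X₃) ((1 - Complex.I * t) / 2)) :=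
  four_matrix_pointwise_rewriting_general X₁ X₂ X₃ X₄ h₂ h₃ h₄ t
end
end

section
/- Let A_1 and A_2 be positive definite complex d×d matrices. Then ∫_ℝ A_2^{(1+it)/2} A_1 A_2^{(1−it)/2} β(t) dt = T_{A_2^{−1}}(A_1), i.e. ∫_ℝ A_2^{(1+it)/2} A_1 A_2^{(1−it)/2} β(t) dt = ∫_0^∞ (A_2^{−1}+τI)^{−1} A_1 (A_2^{−1}+τI)^{−1} dτ. -/
open MeasureTheory
open scoped Kronecker

noncomputable section

/-!
Diagonalise `A₂ = U diag(λ) U*`. Both sides then have `(i, j)` entry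
`∑ k l, U i k (U* A₁ U) k l conj (U j l) K(λ k, λ l)` for a scalar kernel `K`, namely
`∫ a^((1+it)/2) b^((1-it)/2) β(t) dt` on the left and `∫₀^∞ (a⁻¹+τ)⁻¹ (b⁻¹+τ)⁻¹ dτ` on the right,
so it suffices to compare the two kernels for `a, b > 0`.

Writing `a = e^L`, `b = e^M`, the left kernel is `√(ab)` times the Fourier transform of `β` at
`s = (L - M)/2`. The logistic function `σ(πt)` has derivative `β(t)` and maps `ℝ` onto `(0, 1)`,
and `σ/(1-σ) = e^{πt}`; so the substitution `y = σ(πt)` turns that transform into the Beta integral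
`B(1 + is/π, 1 - is/π) = Γ(1 + is/π) Γ(1 - is/π)`, which is `s / sinh s` by the reflection formula.
The right kernel is elementary: `(log a⁻¹ - log b⁻¹)/(a⁻¹ - b⁻¹)`, or `a` when `a = b`. The two agree
because `√(ab) sinh s = (a - b)/2`.
-/

open MeasureTheory Set Filter Topology Real
open Complex (I)

section ResolventIntegral

variable {A B : ℝ}

lemma hasDerivAt_neg_inv_add (A : ℝ) {x : ℝ} (hx : A + x ≠ 0) :
    HasDerivAt (fun τ => -(A + τ)⁻¹) ((A + x) * (A + x))⁻¹ x :=
  (((hasDerivAt_id' x).const_add A).inv hx).neg.congr_deriv (by field_simp)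

lemma tendsto_neg_inv_add_atTop (A : ℝ) : Tendsto (fun τ => -(A + τ)⁻¹) atTop (𝓝 0) := by
  simpa using (tendsto_inv_atTop_zero.comp (tendsto_atTop_add_const_left _ A tendsto_id)).neg

lemma hasDerivAt_log_add_sub_log_add_div (hAB : A ≠ B) {x : ℝ} (hA : A + x ≠ 0)
    (hB : B + x ≠ 0) :
    HasDerivAt (fun τ => (log (A + τ) - log (B + τ)) / (B - A)) ((A + x) * (B + x))⁻¹ x :=
  ((((hasDerivAt_id' x).const_add A).log hA).sub
    (((hasDerivAt_id' x).const_add B).log hB)).div_const (B - A) |>.congr_deriv (by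
      field_simp [sub_ne_zero.2 hAB.symm]; ring)

lemma tendsto_log_add_sub_log_add_atTop (A B : ℝ) :
    Tendsto (fun τ => log (A + τ) - log (B + τ)) atTop (𝓝 0) := by
  simpa [add_comm] using (tendsto_log_comp_add_sub_log A).sub (tendsto_log_comp_add_sub_log B)

lemma integrableOn_Ioi_inv_add_mul_inv_add (hA : 0 < A) (hB : 0 < B) :
    IntegrableOn (fun τ => ((A + τ) * (B + τ))⁻¹) (Ioi 0) := by
  have hpos : ∀ x ∈ Ici (0 : ℝ), 0 < A + x ∧ 0 < B + x := fun x hx =>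
    ⟨by linarith [mem_Ici.1 hx], by linarith [mem_Ici.1 hx]⟩
  have hnonneg : ∀ x ∈ Ioi (0 : ℝ), 0 ≤ ((A + x) * (B + x))⁻¹ := fun x hx => by
    have := mem_Ioi.1 hx; positivity
  rcases eq_or_ne A B with rfl | hAB
  · exact integrableOn_Ioi_deriv_of_nonneg'
      (fun x hx => hasDerivAt_neg_inv_add A (hpos x hx).1.ne') hnonneg (tendsto_neg_inv_add_atTop A)
  · exact integrableOn_Ioi_deriv_of_nonneg'
      (fun x hx => hasDerivAt_log_add_sub_log_add_div hAB (hpos x hx).1.ne' (hpos x hx).2.ne')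
      hnonneg (by simpa using (tendsto_log_add_sub_log_add_atTop A B).div_const (B - A))

lemma integral_Ioi_inv_add_mul_inv_add_self (hA : 0 < A) :
    ∫ τ in Ioi 0, ((A + τ) * (A + τ))⁻¹ = A⁻¹ := by
  rw [integral_Ioi_of_hasDerivAt_of_nonneg'
    (fun x hx => hasDerivAt_neg_inv_add A (by linarith [mem_Ici.1 hx]))
    (fun x hx => by have := mem_Ioi.1 hx; positivity) (tendsto_neg_inv_add_atTop A)]
  simp

lemma integral_Ioi_inv_add_mul_inv_add (hA : 0 < A) (hB : 0 < B) (hAB : A ≠ B) :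
    ∫ τ in Ioi 0, ((A + τ) * (B + τ))⁻¹ = (log A - log B) / (A - B) := by
  rw [integral_Ioi_of_hasDerivAt_of_nonneg'
    (fun x hx => hasDerivAt_log_add_sub_log_add_div hAB (by linarith [mem_Ici.1 hx])
      (by linarith [mem_Ici.1 hx]))
    (fun x hx => by have := mem_Ioi.1 hx; positivity)
    (by simpa using (tendsto_log_add_sub_log_add_atTop A B).div_const (B - A))]
  rw [← neg_sub B A, div_neg]
  simp

end ResolventIntegral

lemma log_sigmoid_sub_log_one_sub_sigmoid (x : ℝ) :
    log (sigmoid x) - log (1 - sigmoid x) = x := by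
  rw [← sigmoid_neg, ← sigmoid_mul_rexp_neg, log_mul (sigmoid_pos x).ne' (exp_pos _).ne', log_exp]
  ring

lemma betaD_eq_sigmoid (t : ℝ) : betaD t = π * (sigmoid (π * t) * (1 - sigmoid (π * t))) := by
  rw [← sigmoid_neg, sigmoid_def, sigmoid_def, betaD, cosh_eq, neg_neg, exp_neg]
  field_simp
  ring

lemma betaD_pos (t : ℝ) : 0 < betaD t := by
  rw [betaD_eq_sigmoid]
  exact mul_pos pi_pos (mul_pos (sigmoid_pos _) (sub_pos.2 (sigmoid_lt_one _)))

lemma hasDerivAt_sigmoid_pi_mul (t : ℝ) :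
    HasDerivAt (fun t => sigmoid (π * t)) (betaD t) t :=
  ((hasDerivAt_sigmoid (π * t)).comp t ((hasDerivAt_id' t).const_mul π)).congr_deriv (by
    rw [betaD_eq_sigmoid]; ring)

lemma image_sigmoid_pi_mul : (fun t => sigmoid (π * t)) '' univ = Ioo 0 1 := by
  rw [image_univ, ← range_sigmoid]
  exact (mul_left_surjective₀ pi_ne_zero).range_comp sigmoid

lemma integral_betaD_smul_comp_sigmoid {E : Type*} [NormedAddCommGroup E] [NormedSpace ℝ E]
    (g : ℝ → E) :
    ∫ t, betaD t • g (sigmoid (π * t)) = ∫ y in Ioo 0 1, g y := by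
  rw [← image_sigmoid_pi_mul, integral_image_eq_integral_abs_deriv_smul MeasurableSet.univ
    (fun t _ => (hasDerivAt_sigmoid_pi_mul t).hasDerivWithinAt)
    (sigmoid_injective.comp (mul_right_injective₀ pi_ne_zero)).injOn, setIntegral_univ]
  simp_rw [abs_of_pos (betaD_pos _)]

lemma integrable_betaD : Integrable betaD := by
  have := (integrableOn_image_iff_integrableOn_abs_deriv_smul MeasurableSet.univ
    (fun t _ => (hasDerivAt_sigmoid_pi_mul t).hasDerivWithinAt)
    (sigmoid_injective.comp (mul_right_injective₀ pi_ne_zero)).injOn (fun _ => (1 : ℝ))).1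
    (by rw [image_sigmoid_pi_mul]; exact integrableOn_const measure_Ioo_lt_top.ne)
  simpa [abs_of_pos (betaD_pos _)] using this

lemma integral_betaD : ∫ t, betaD t = 1 := by
  simpa using integral_betaD_smul_comp_sigmoid (fun _ => (1 : ℝ))

lemma integrable_cexp_mul_betaD (s : ℝ) :
    Integrable (fun t : ℝ => Complex.exp (I * s * t) * betaD t) := by
  have : Continuous betaD := by unfold betaD; fun_prop (disch := intros; positivity)
  refine integrable_betaD.mono' (by fun_prop) (ae_of_all _ fun t => ?_)
  simp [Complex.norm_exp, abs_of_pos (betaD_pos t)]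

lemma ofReal_cpow_mul_one_sub_cpow_neg {y : ℝ} (hy : y ∈ Ioo 0 1) (w : ℂ) :
    (y : ℂ) ^ w * (1 - (y : ℂ)) ^ (-w) = Complex.exp (w * (log y - log (1 - y) : ℝ)) := by
  have h1y : (0 : ℝ) < 1 - y := sub_pos.2 hy.2
  rw [Complex.cpow_def_of_ne_zero (by exact_mod_cast hy.1.ne'),
    Complex.cpow_def_of_ne_zero (by exact_mod_cast h1y.ne'), ← Complex.exp_add,
    ← Complex.ofReal_log hy.1.le, ← Complex.ofReal_one, ← Complex.ofReal_sub,
    ← Complex.ofReal_log h1y.le]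
  push_cast
  ring_nf

lemma integral_cexp_mul_betaD (s : ℝ) :
    ∫ t : ℝ, Complex.exp (I * s * t) * betaD t =
      Complex.betaIntegral (1 + I * (s / π : ℝ)) (1 - I * (s / π : ℝ)) := by
  set w : ℂ := I * (s / π : ℝ)
  set g : ℝ → ℂ := fun y => Complex.exp (w * (log y - log (1 - y) : ℝ))
  calc ∫ t : ℝ, Complex.exp (I * s * t) * betaD t
      = ∫ t : ℝ, betaD t • g (sigmoid (π * t)) := by
        refine integral_congr_ae (ae_of_all _ fun t => ?_)
        simp only [g, w, log_sigmoid_sub_log_one_sub_sigmoid, Complex.real_smul]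
        push_cast
        field_simp
    _ = ∫ y in Ioo 0 1, g y := integral_betaD_smul_comp_sigmoid g
    _ = Complex.betaIntegral (1 + w) (1 - w) := by
        rw [Complex.betaIntegral, intervalIntegral.integral_of_le zero_le_one,
          integral_Ioc_eq_integral_Ioo]
        refine setIntegral_congr_fun measurableSet_Ioo fun y hy => ?_
        rw [add_sub_cancel_left, sub_sub_cancel_left, ofReal_cpow_mul_one_sub_cpow_neg hy]

lemma Gamma_one_add_I_mul_mul_Gamma_one_sub_I_mul {r : ℝ} (hr : r ≠ 0) :
    Complex.Gamma (1 + I * r) * Complex.Gamma (1 - I * r) = (π * r / sinh (π * r) : ℝ) := by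
  have hw : I * r ≠ 0 := mul_ne_zero Complex.I_ne_zero (Complex.ofReal_ne_zero.2 hr)
  have hs : sinh (π * r) ≠ 0 := by simpa [sinh_eq_zero] using mul_ne_zero pi_ne_zero hr
  rw [add_comm, Complex.Gamma_add_one _ hw, mul_assoc, Complex.Gamma_mul_Gamma_one_sub,
    show (π : ℂ) * (I * r) = (π * r : ℝ) * I by push_cast; ring, Complex.sin_mul_I,
    ← Complex.ofReal_sinh]
  have : (sinh (π * r) : ℂ) ≠ 0 := Complex.ofReal_ne_zero.2 hs
  push_cast
  field_simp

lemma betaIntegral_one_add_I_mul (r : ℝ) :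
    Complex.betaIntegral (1 + I * r) (1 - I * r) =
      Complex.Gamma (1 + I * r) * Complex.Gamma (1 - I * r) := by
  have := Complex.Gamma_mul_Gamma_eq_betaIntegral (s := 1 + I * r) (t := 1 - I * r) (by simp)
    (by simp)
  rwa [add_add_sub_cancel, one_add_one_eq_two, Complex.Gamma_ofNat_eq_factorial, Nat.factorial_one,
    Nat.cast_one, one_mul, eq_comm] at this

lemma integral_cexp_mul_betaD_of_ne_zero {s : ℝ} (hs : s ≠ 0) :
    ∫ t : ℝ, Complex.exp (I * s * t) * betaD t = (s / sinh s : ℝ) := by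
  rw [integral_cexp_mul_betaD, betaIntegral_one_add_I_mul,
    Gamma_one_add_I_mul_mul_Gamma_one_sub_I_mul (div_ne_zero hs pi_ne_zero),
    mul_div_cancel₀ _ pi_ne_zero]

lemma exp_add_div_two_mul_sinh_sub_div_two (x y : ℝ) :
    exp ((x + y) / 2) * sinh ((x - y) / 2) = (exp x - exp y) / 2 := by
  rw [sinh_eq, mul_div_assoc', mul_sub, ← exp_add, ← exp_add]
  ring_nf

lemma log_inv_sub_log_inv_div_inv_sub_inv {a b : ℝ} (ha : 0 < a) (hb : 0 < b) (hab : a ≠ b) :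
    (log a⁻¹ - log b⁻¹) / (a⁻¹ - b⁻¹) =
      exp ((log a + log b) / 2) * (((log a - log b) / 2) / sinh ((log a - log b) / 2)) := by
  have hsinh := exp_add_div_two_mul_sinh_sub_div_two (log a) (log b)
  have hsq : exp ((log a + log b) / 2) * exp ((log a + log b) / 2) = a * b := by
    rw [← exp_add, add_halves, exp_add, exp_log ha, exp_log hb]
  rw [exp_log ha, exp_log hb] at hsinh
  have hs : sinh ((log a - log b) / 2) ≠ 0 := by
    intro h; rw [h, mul_zero] at hsinh; exact hab (by linarith)
  have hab' : a⁻¹ - b⁻¹ ≠ 0 := sub_ne_zero.2 (inv_injective.ne hab)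
  rw [log_inv, log_inv, eq_comm]
  field_simp
  refine mul_left_cancel₀ (exp_pos ((log a + log b) / 2)).ne' ?_
  linear_combination (log a - log b) * (b - a) * hsq + 2 * (log a - log b) * a * b * hsinh

lemma ofReal_cpow_mul_ofReal_cpow {a b : ℝ} (ha : 0 < a) (hb : 0 < b) (t : ℝ) :
    (a : ℂ) ^ ((1 + I * t) / 2) * (b : ℂ) ^ ((1 - I * t) / 2) =
      exp ((log a + log b) / 2) * Complex.exp (I * ((log a - log b) / 2 : ℝ) * t) := by
  rw [Complex.cpow_def_of_ne_zero (by exact_mod_cast ha.ne'),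
    Complex.cpow_def_of_ne_zero (by exact_mod_cast hb.ne'), ← Complex.ofReal_log ha.le,
    ← Complex.ofReal_log hb.le, Complex.ofReal_exp, ← Complex.exp_add, ← Complex.exp_add]
  push_cast
  ring_nf

lemma integrable_cpow_mul_cpow_mul_betaD {a b : ℝ} (ha : 0 < a) (hb : 0 < b) :
    Integrable fun t : ℝ =>
      (a : ℂ) ^ ((1 + I * t) / 2) * (b : ℂ) ^ ((1 - I * t) / 2) * betaD t := by
  simp_rw [ofReal_cpow_mul_ofReal_cpow ha hb, mul_assoc ((exp _ : ℝ) : ℂ)]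
  exact (integrable_cexp_mul_betaD _).const_mul _

lemma integrableOn_Ioi_inv_add_mul_inv_add_complex {a b : ℝ} (ha : 0 < a) (hb : 0 < b) :
    IntegrableOn (fun τ : ℝ => ((a : ℂ)⁻¹ + τ)⁻¹ * ((b : ℂ)⁻¹ + τ)⁻¹) (Ioi 0) :=
  IntegrableOn.congr_fun (integrableOn_Ioi_inv_add_mul_inv_add (inv_pos.2 ha) (inv_pos.2 hb)).ofReal
    (fun τ _ => by simp [mul_comm]) measurableSet_Ioi

lemma integral_cpow_mul_cpow_mul_betaD {a b : ℝ} (ha : 0 < a) (hb : 0 < b) :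
    ∫ t : ℝ, (a : ℂ) ^ ((1 + I * t) / 2) * (b : ℂ) ^ ((1 - I * t) / 2) * betaD t =
      ∫ τ in Ioi (0 : ℝ), ((a : ℂ)⁻¹ + τ)⁻¹ * ((b : ℂ)⁻¹ + τ)⁻¹ := by
  have hRHS : ∫ τ in Ioi (0 : ℝ), ((a : ℂ)⁻¹ + τ)⁻¹ * ((b : ℂ)⁻¹ + τ)⁻¹ =
      (∫ τ in Ioi 0, ((a⁻¹ + τ) * (b⁻¹ + τ))⁻¹ : ℝ) := by
    rw [← integral_complex_ofReal]; push_cast; simp_rw [mul_inv]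
  simp_rw [hRHS, ofReal_cpow_mul_ofReal_cpow ha hb, mul_assoc ((exp _ : ℝ) : ℂ),
    integral_const_mul]
  rcases eq_or_ne a b with rfl | hab
  · rw [integral_Ioi_inv_add_mul_inv_add_self (inv_pos.2 ha)]
    simp [integral_complex_ofReal, integral_betaD, exp_log ha]
  · have hs : (log a - log b) / 2 ≠ 0 := by
      simpa [sub_eq_zero] using (log_injOn_pos.ne ha hb hab)
    rw [integral_cexp_mul_betaD_of_ne_zero hs, ← Complex.ofReal_mul,
      integral_Ioi_inv_add_mul_inv_add (inv_pos.2 ha) (inv_pos.2 hb) (inv_injective.ne hab),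
      log_inv_sub_log_inv_div_inv_sub_inv ha hb hab]

open Matrix

section Spectral

variable {ι : Type*} [Fintype ι] [DecidableEq ι]

lemma Matrix.mul_diagonal_mul_sandwich_apply {R : Type*} [CommSemiring R]
    (P Q X : Matrix ι ι R) (f g : ι → R) (i j : ι) :
    (P * diagonal f * Q * X * (P * diagonal g * Q)) i j =
      ∑ k, ∑ l, P i k * (Q * X * P) k l * Q l j * (f k * g l) := by
  rw [show P * diagonal f * Q * X * (P * diagonal g * Q) =
      P * (diagonal f * (Q * X * P) * diagonal g) * Q by simp only [Matrix.mul_assoc]]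
  generalize Q * X * P = M
  rw [mul_apply]
  simp only [mul_apply (M := P), mul_diagonal, diagonal_mul, Finset.sum_mul]
  rw [Finset.sum_comm]
  exact Finset.sum_congr rfl fun k _ => Finset.sum_congr rfl fun l _ => by ring

lemma Matrix.IsHermitian.mcpow_eq {A : Matrix ι ι ℂ} (hA : A.IsHermitian) (z : ℂ) :
    mcpow A z = Unitary.conjStarAlgAut ℂ _ hA.eigenvectorUnitary
      (diagonal fun k => (hA.eigenvalues k : ℂ) ^ z) := by
  simp only [mcpow, dif_pos hA]
  rfl

lemma Unitary.conjStarAlgAut_diagonal_inv (U : unitary (Matrix ι ι ℂ)) {f : ι → ℂ}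
    (hf : ∀ k, f k ≠ 0) :
    (Unitary.conjStarAlgAut ℂ _ U (diagonal f))⁻¹ =
      Unitary.conjStarAlgAut ℂ _ U (diagonal f⁻¹) :=
  inv_eq_right_inv (by
    rw [← map_mul, diagonal_mul_diagonal]
    simp [hf])

open scoped ComplexOrder in
lemma Matrix.PosDef.inv_add_smul_one_inv {A : Matrix ι ι ℂ} (hA : A.PosDef) {τ : ℝ}
    (hτ : 0 ≤ τ) :
    (A⁻¹ + (τ : ℂ) • 1)⁻¹ = Unitary.conjStarAlgAut ℂ _ hA.1.eigenvectorUnitary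
      (diagonal fun k => ((hA.1.eigenvalues k : ℂ)⁻¹ + τ)⁻¹) := by
  set φ := Unitary.conjStarAlgAut ℂ (Matrix ι ι ℂ) hA.1.eigenvectorUnitary
  have hA' : A = φ (diagonal fun k => (hA.1.eigenvalues k : ℂ)) := hA.1.spectral_theorem
  have hsum : A⁻¹ + (τ : ℂ) • 1 = φ (diagonal fun k => (hA.1.eigenvalues k : ℂ)⁻¹ + τ) := by
    conv_lhs => rw [hA']
    rw [Unitary.conjStarAlgAut_diagonal_inv _ fun k => mod_cast (hA.eigenvalues_pos k).ne',
      ← map_one φ, ← map_smul, ← map_add, smul_one_eq_diagonal, diagonal_add]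
    rfl
  rw [hsum, Unitary.conjStarAlgAut_diagonal_inv _ fun k => ?_]
  · rfl
  · have := hA.eigenvalues_pos k
    exact_mod_cast (by positivity : (0 : ℝ) < (hA.1.eigenvalues k)⁻¹ + τ).ne'

end Spectral

lemma integral_sum_sum_mul {α ι κ 𝕜 : Type*} [MeasurableSpace α] {μ : Measure α} [Fintype ι]
    [Fintype κ] [RCLike 𝕜] (c : ι → κ → 𝕜) {F : ι → κ → α → 𝕜}
    (hF : ∀ k l, Integrable (F k l) μ) :
    ∫ t, ∑ k, ∑ l, c k l * F k l t ∂μ = ∑ k, ∑ l, c k l * ∫ t, F k l t ∂μ := by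
  rw [integral_finsetSum _ fun k _ => integrable_finsetSum _ fun l _ => (hF k l).const_mul _]
  simp_rw [integral_finsetSum _ fun l _ => (hF _ l).const_mul _, integral_const_mul]

open ComplexOrder in
theorem beta_average_eq_T_general {d : ℕ} (A₁ A₂ : Matrix (Fin d) (Fin d) ℂ)
    (h₂ : A₂.PosDef) :
    (Matrix.of fun i j =>
        ∫ t : ℝ,
          (mcpow A₂ ((1 + Complex.I * t) / 2) * A₁ * mcpow A₂ ((1 - Complex.I * t) / 2)) i j *
            (betaD t : ℂ)) =
      Tmap A₂⁻¹ A₁ := by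
  set U : Matrix (Fin d) (Fin d) ℂ := (h₂.1.eigenvectorUnitary : Matrix (Fin d) (Fin d) ℂ)
  set ev := h₂.1.eigenvalues
  ext i j
  set c : Fin d → Fin d → ℂ := fun k l => U i k * (star U * A₁ * U) k l * star U l j
  have hL (t : ℝ) :
      (mcpow A₂ ((1 + I * t) / 2) * A₁ * mcpow A₂ ((1 - I * t) / 2)) i j * betaD t =
        ∑ k, ∑ l, c k l *
          ((ev k : ℂ) ^ ((1 + I * t) / 2) * (ev l : ℂ) ^ ((1 - I * t) / 2) * betaD t) := by
    simp only [h₂.1.mcpow_eq, Unitary.conjStarAlgAut_apply,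
      mul_diagonal_mul_sandwich_apply, Finset.sum_mul]
    exact Finset.sum_congr rfl fun k _ => Finset.sum_congr rfl fun l _ => by ring
  have hR : ∀ τ ∈ Ioi (0 : ℝ), ((A₂⁻¹ + (τ : ℂ) • 1)⁻¹ * A₁ * (A₂⁻¹ + (τ : ℂ) • 1)⁻¹) i j =
      ∑ k, ∑ l, c k l * (((ev k : ℂ)⁻¹ + τ)⁻¹ * ((ev l : ℂ)⁻¹ + τ)⁻¹) := fun τ hτ => by
    simp only [h₂.inv_add_smul_one_inv (le_of_lt hτ), Unitary.conjStarAlgAut_apply,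
      mul_diagonal_mul_sandwich_apply]
    rfl
  simp only [of_apply, Tmap]
  rw [integral_congr_ae (ae_of_all _ hL), setIntegral_congr_fun measurableSet_Ioi hR,
    integral_sum_sum_mul _ fun k l =>
      integrable_cpow_mul_cpow_mul_betaD (h₂.eigenvalues_pos k) (h₂.eigenvalues_pos l),
    integral_sum_sum_mul _ fun k l =>
      integrableOn_Ioi_inv_add_mul_inv_add_complex (h₂.eigenvalues_pos k) (h₂.eigenvalues_pos l)]
  simp_rw [integral_cpow_mul_cpow_mul_betaD (h₂.eigenvalues_pos _) (h₂.eigenvalues_pos _)]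

open ComplexOrder in
/-- `∫ A₂^{(1+it)/2} A₁ A₂^{(1-it)/2} β(t) dt = T_{A₂⁻¹}(A₁) = ∫₀^∞ (A₂⁻¹+τ)⁻¹ A₁ (A₂⁻¹+τ)⁻¹ dτ`. -/
theorem beta_average_eq_T {d : ℕ} (A₁ A₂ : Matrix (Fin d) (Fin d) ℂ)
    (h₁ : A₁.PosDef) (h₂ : A₂.PosDef) :
    (Matrix.of fun i j =>
        ∫ t : ℝ,
          (mcpow A₂ ((1 + Complex.I * t) / 2) * A₁ * mcpow A₂ ((1 - Complex.I * t) / 2)) i j *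
            (betaD t : ℂ)) =
      Tmap A₂⁻¹ A₁ :=
  beta_average_eq_T_general A₁ A₂ h₂

end
end

section
/- Let A be a self-adjoint complex m×m matrix and let P be an orthogonal projection on ℂ^m with ker P = span{v} for a unit vector v. Then lim_{t→∞} Tr[exp(A − tP)] = exp(⟨v, Av⟩). -/
open MeasureTheory
open scoped Kronecker

noncomputable section

/-!
Since `P = 1 - v vᴴ`, for a unit vector `u = ⟪v, u⟫ v + r` with `r ⊥ v` one has
`⟪u, (A - tP) u⟫ = ⟪u, A u⟫ - t ‖r‖² ≤ ⟪v, A v⟫ + 2‖A‖‖r‖ - (t - ‖A‖)‖r‖²`,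
which is at most `⟪v, A v⟫ + ‖A‖² / (t - ‖A‖)`.
So every eigenvalue of `A - tP` is at most `⟪v, A v⟫ + O(1/t)`, and testing against `v` shows that
the largest one is at least `⟪v, A v⟫`. All eigenvalues are at least `-‖A‖ - t` and they add up to
`Tr A - (m - 1) t`, so the other `m - 1` eigenvalues tend to `-∞`, and
`Tr exp(A - tP) = ∑ exp λₖ(t) → exp ⟪v, A v⟫`.
-/

open RCLike
open scoped InnerProductSpace

section InnerProductSpace

variable {𝕜 E : Type*} [RCLike 𝕜] [NormedAddCommGroup E] [InnerProductSpace 𝕜 E]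

theorem re_inner_sub_inner_smul (u v : E) :
    re ⟪u, u - ⟪v, u⟫_𝕜 • v⟫_𝕜 = ‖u‖ ^ 2 - ‖⟪v, u⟫_𝕜‖ ^ 2 := by
  rw [inner_sub_right, inner_smul_right, ← inner_conj_symm u v, RCLike.mul_conj, map_sub,
    inner_self_eq_norm_sq, ← ofReal_pow, ofReal_re]

theorem ContinuousLinearMap.re_inner_apply_le (T : E →L[𝕜] E) (x y : E) :
    re ⟪x, T y⟫_𝕜 ≤ ‖x‖ * (‖T‖ * ‖y‖) :=
  (re_le_norm _).trans ((norm_inner_le_norm _ _).trans (by gcongr; exact T.le_opNorm y))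

theorem ContinuousLinearMap.neg_norm_le_re_inner_apply_self (T : E →L[𝕜] E) {x : E}
    (hx : ‖x‖ = 1) : -‖T‖ ≤ re ⟪x, T x⟫_𝕜 := by
  have := (-T).re_inner_apply_le x x
  rw [hx, neg_apply, inner_neg_right, map_neg, norm_neg] at this
  linarith

theorem neg_norm_sub_le_re_inner_sub_smul {T P : E →L[𝕜] E} {u v : E} (hu : ‖u‖ = 1)
    (hP : ∀ x, P x = x - ⟪v, x⟫_𝕜 • v) {t : ℝ} (ht : 0 ≤ t) :
    -‖T‖ - t ≤ re ⟪u, (T - (t : 𝕜) • P) u⟫_𝕜 := by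
  have hPu : re ⟪u, P u⟫_𝕜 ≤ 1 := by
    rw [hP, re_inner_sub_inner_smul, hu]
    nlinarith [norm_nonneg ⟪v, u⟫_𝕜]
  rw [sub_apply, inner_sub_right, map_sub, smul_apply, inner_smul_right, re_ofReal_mul]
  nlinarith [T.neg_norm_le_re_inner_apply_self hu]

theorem re_inner_sub_smul_le {T P : E →L[𝕜] E} {u v : E} (hu : ‖u‖ = 1) (hv : ‖v‖ = 1)
    (hP : ∀ x, P x = x - ⟪v, x⟫_𝕜 • v) {t : ℝ} (ht : ‖T‖ < t) :
    re ⟪u, (T - (t : 𝕜) • P) u⟫_𝕜 ≤ re ⟪v, T v⟫_𝕜 + ‖T‖ ^ 2 / (t - ‖T‖) := by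
  set w := ⟪v, u⟫_𝕜
  set r := u - w • v
  have horth : ⟪w • v, r⟫_𝕜 = 0 := by
    rw [inner_smul_left, inner_sub_right, inner_smul_right, inner_self_eq_norm_sq_to_K, hv]
    simp [w]
  have hr : ‖w‖ ^ 2 = 1 - ‖r‖ ^ 2 := by
    have := norm_add_sq_eq_norm_sq_add_norm_sq_of_inner_eq_zero _ _ horth
    rw [add_sub_cancel, hu, norm_smul, hv, mul_one] at this
    linarith
  have hsplit : ⟪u, T u⟫_𝕜 = ⟪w • v, T (w • v)⟫_𝕜 + ⟪w • v, T r⟫_𝕜 + ⟪r, T u⟫_𝕜 := by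
    have hu' : w • v + r = u := add_sub_cancel _ _
    calc ⟪u, T u⟫_𝕜 = ⟪w • v, T u⟫_𝕜 + ⟪r, T u⟫_𝕜 := by rw [← inner_add_left, hu']
      _ = _ := by congr 1; conv_lhs => rw [← hu', map_add, inner_add_right]
  have hvv : re ⟪w • v, T (w • v)⟫_𝕜 = ‖w‖ ^ 2 * re ⟪v, T v⟫_𝕜 := by
    rw [map_smul, inner_smul_left, inner_smul_right, ← mul_assoc, RCLike.conj_mul, ← ofReal_pow,
      re_ofReal_mul]
  have hvr : re ⟪w • v, T r⟫_𝕜 ≤ ‖T‖ * ‖r‖ := by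
    refine (T.re_inner_apply_le _ _).trans (mul_le_of_le_one_left (by positivity) ?_)
    rw [norm_smul, hv, mul_one]
    nlinarith [norm_nonneg r, norm_nonneg w]
  have hru : re ⟪r, T u⟫_𝕜 ≤ ‖r‖ * ‖T‖ := by simpa [hu] using T.re_inner_apply_le r u
  have hPu : re ⟪u, P u⟫_𝕜 = ‖r‖ ^ 2 := by rw [hP, re_inner_sub_inner_smul, hu, hr]; ring
  have hvTv := T.neg_norm_le_re_inner_apply_self hv
  have hAMGM : 2 * ‖T‖ * ‖r‖ - (t - ‖T‖) * ‖r‖ ^ 2 ≤ ‖T‖ ^ 2 / (t - ‖T‖) := by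
    rw [le_div_iff₀ (sub_pos.2 ht)]
    nlinarith [sq_nonneg ((t - ‖T‖) * ‖r‖ - ‖T‖)]
  rw [sub_apply, inner_sub_right, map_sub, smul_apply, inner_smul_right, re_ofReal_mul, hPu,
    hsplit, map_add, map_add, hvv, hr]
  nlinarith [mul_nonneg (sq_nonneg ‖r‖) (neg_le_iff_add_nonneg.1 hvTv)]

theorem OrthonormalBasis.exists_re_inner_apply_self_le {ι F : Type*} [Fintype ι] [FunLike F E E]
    [LinearMapClass F 𝕜 E E] (b : OrthonormalBasis ι 𝕜 E) {T : F} {μ : ι → ℝ}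
    (hb : ∀ i, T (b i) = (μ i : 𝕜) • b i) {x : E} (hx : ‖x‖ = 1) :
    ∃ i, re ⟪x, T x⟫_𝕜 ≤ μ i := by
  have hq : ∑ i, ‖⟪b i, x⟫_𝕜‖ ^ 2 = 1 := by rw [b.sum_sq_norm_inner_right, hx, one_pow]
  have hTx : T x = ∑ i, (⟪b i, x⟫_𝕜 * μ i) • b i := by
    conv_lhs => rw [← b.sum_repr' x]
    simp only [map_sum, map_smul, hb, smul_smul]
  have hre : re ⟪x, T x⟫_𝕜 = ∑ i, μ i * ‖⟪b i, x⟫_𝕜‖ ^ 2 := by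
    rw [hTx, inner_sum, map_sum]
    refine Finset.sum_congr rfl fun i _ => ?_
    rw [inner_smul_right, ← inner_conj_symm x, mul_comm, ← mul_assoc, RCLike.conj_mul,
      ← ofReal_pow, ← ofReal_mul, ofReal_re, mul_comm]
  have : Nonempty ι := by
    by_contra h
    rw [not_nonempty_iff] at h
    simp at hq
  obtain ⟨i₀, hi₀⟩ := Finite.exists_max μ
  refine ⟨i₀, ?_⟩
  calc re ⟪x, T x⟫_𝕜 = ∑ i, μ i * ‖⟪b i, x⟫_𝕜‖ ^ 2 := hre
    _ ≤ ∑ i, μ i₀ * ‖⟪b i, x⟫_𝕜‖ ^ 2 := by gcongr with i; exact hi₀ i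
    _ = μ i₀ := by rw [← Finset.mul_sum, hq, mul_one]

end InnerProductSpace

theorem EuclideanSpace.norm_toLp_eq_one {𝕜 n : Type*} [RCLike 𝕜] [Fintype n] {v : n → 𝕜}
    (hv : star v ⬝ᵥ v = 1) : ‖WithLp.toLp 2 v‖ = 1 := by
  have : ((‖WithLp.toLp 2 v‖ ^ 2 : ℝ) : 𝕜) = 1 := by
    rw [ofReal_pow, ← inner_self_eq_norm_sq_to_K, EuclideanSpace.inner_eq_star_dotProduct,
      dotProduct_comm]
    exact hv
  exact (pow_eq_one_iff_of_nonneg (norm_nonneg _) two_ne_zero).mp (by exact_mod_cast this)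

namespace Matrix

open WithLp

variable {𝕜 n : Type*} [RCLike 𝕜] [Fintype n] [DecidableEq n]

theorem IsHermitian.toEuclideanCLM_eigenvectorBasis {H : Matrix n n 𝕜} (hH : H.IsHermitian)
    (i : n) :
    toEuclideanCLM (n := n) (𝕜 := 𝕜) H (hH.eigenvectorBasis i) =
      (hH.eigenvalues i : 𝕜) • hH.eigenvectorBasis i := by
  apply ofLp_injective 2
  rw [ofLp_toEuclideanCLM, mulVec_eigenvectorBasis, ofLp_smul,
    RCLike.real_smul_eq_coe_smul (K := 𝕜)]

theorem IsHermitian.eigenvalues_eq_re_inner {H : Matrix n n 𝕜} (hH : H.IsHermitian) (i : n) :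
    hH.eigenvalues i = re ⟪hH.eigenvectorBasis i,
      toEuclideanCLM (n := n) (𝕜 := 𝕜) H (hH.eigenvectorBasis i)⟫_𝕜 := by
  rw [hH.eigenvalues_eq, EuclideanSpace.inner_eq_star_dotProduct, ofLp_toEuclideanCLM,
    dotProduct_comm]

theorem IsHermitian.trace_exp {H : Matrix n n ℂ} (hH : H.IsHermitian) :
    (NormedSpace.exp H).trace = ∑ i, Complex.exp (hH.eigenvalues i) := by
  set U : Matrix n n ℂ := (hH.eigenvectorUnitary : Matrix n n ℂ)
  have hU : star U * U = 1 := Unitary.coe_star_mul_self _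
  have hexp : NormedSpace.exp H =
      U * NormedSpace.exp (diagonal (RCLike.ofReal ∘ hH.eigenvalues)) * star U := by
    conv_lhs => rw [hH.spectral_theorem, Unitary.conjStarAlgAut_apply]
    exact Matrix.exp_units_conj (Unitary.toUnits hH.eigenvectorUnitary) _
  rw [hexp, trace_mul_cycle, hU, one_mul, exp_diagonal, trace_diagonal]
  simp [Complex.exp_eq_exp_ℂ]

theorem eq_one_sub_vecMulVec_of_ker_eq_span {P : Matrix n n 𝕜} (hP : P.IsHermitian)
    (hP2 : P * P = P) {v : n → 𝕜} (hv : star v ⬝ᵥ v = 1)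
    (hker : ∀ w : n → 𝕜, P *ᵥ w = 0 ↔ ∃ c : 𝕜, w = c • v) :
    P = 1 - vecMulVec v (star v) := by
  have hvP : star v ᵥ* P = 0 := by
    have hPv : P *ᵥ v = 0 := (hker v).mpr ⟨1, (one_smul _ _).symm⟩
    simpa [star_mulVec, hP.eq] using congrArg star hPv
  refine ext_iff_mulVec.mpr fun w => ?_
  obtain ⟨c, hc⟩ := (hker (w - P *ᵥ w)).mp (by rw [mulVec_sub, mulVec_mulVec, hP2, sub_self])
  have hcv : c = star v ⬝ᵥ w := by
    simpa [dotProduct_sub, dotProduct_mulVec, hvP, hv] using (congrArg (star v ⬝ᵥ ·) hc).symm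
  rw [sub_mulVec, one_mulVec, vecMulVec_mulVec, op_smul_eq_smul, ← hcv, ← hc, sub_sub_cancel]

theorem toEuclideanCLM_one_sub_vecMulVec_apply (v : n → 𝕜) (x : EuclideanSpace 𝕜 n) :
    toEuclideanCLM (n := n) (𝕜 := 𝕜) (1 - vecMulVec v (star v)) x =
      x - ⟪toLp 2 v, x⟫_𝕜 • toLp 2 v := by
  apply ofLp_injective 2
  rw [ofLp_toEuclideanCLM, sub_mulVec, one_mulVec, vecMulVec_mulVec, op_smul_eq_smul,
    EuclideanSpace.inner_eq_star_dotProduct, dotProduct_comm]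
  rfl

theorem trace_one_sub_vecMulVec (v : n → 𝕜) :
    trace (1 - vecMulVec v (star v)) = Fintype.card n - star v ⬝ᵥ v := by
  rw [trace_sub, trace_one, trace_vecMulVec, dotProduct_comm]

section SubSmulProjection

variable {A : Matrix n n 𝕜} {v : n → 𝕜} {t : ℝ}

theorem eigenvalues_sub_smul_one_sub_vecMulVec_le (hv : star v ⬝ᵥ v = 1)
    (hH : (A - (t : 𝕜) • (1 - vecMulVec v (star v))).IsHermitian)
    (ht : ‖toEuclideanCLM (n := n) (𝕜 := 𝕜) A‖ < t) (i : n) :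
    hH.eigenvalues i ≤ re (star v ⬝ᵥ A *ᵥ v) + ‖toEuclideanCLM (n := n) (𝕜 := 𝕜) A‖ ^ 2 /
      (t - ‖toEuclideanCLM (n := n) (𝕜 := 𝕜) A‖) := by
  rw [hH.eigenvalues_eq_re_inner, map_sub, map_smul, dotProduct_comm]
  exact re_inner_sub_smul_le (hH.eigenvectorBasis.orthonormal.1 i)
    (EuclideanSpace.norm_toLp_eq_one hv) (toEuclideanCLM_one_sub_vecMulVec_apply v) ht

theorem neg_sub_le_eigenvalues_sub_smul_one_sub_vecMulVec
    (hH : (A - (t : 𝕜) • (1 - vecMulVec v (star v))).IsHermitian) (ht : 0 ≤ t) (i : n) :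
    -‖toEuclideanCLM (n := n) (𝕜 := 𝕜) A‖ - t ≤ hH.eigenvalues i := by
  rw [hH.eigenvalues_eq_re_inner, map_sub, map_smul]
  exact neg_norm_sub_le_re_inner_sub_smul (hH.eigenvectorBasis.orthonormal.1 i)
    (toEuclideanCLM_one_sub_vecMulVec_apply v) ht

theorem exists_le_eigenvalues_sub_smul_one_sub_vecMulVec (hv : star v ⬝ᵥ v = 1)
    (hH : (A - (t : 𝕜) • (1 - vecMulVec v (star v))).IsHermitian) :
    ∃ i, re (star v ⬝ᵥ A *ᵥ v) ≤ hH.eigenvalues i := by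
  have hv' := EuclideanSpace.norm_toLp_eq_one hv
  have hPv : toEuclideanCLM (n := n) (𝕜 := 𝕜) (1 - vecMulVec v (star v)) (toLp 2 v) = 0 := by
    rw [toEuclideanCLM_one_sub_vecMulVec_apply, inner_self_eq_norm_sq_to_K, hv']
    simp
  obtain ⟨i, hi⟩ := hH.eigenvectorBasis.exists_re_inner_apply_self_le
    hH.toEuclideanCLM_eigenvectorBasis hv'
  refine ⟨i, ?_⟩
  rwa [map_sub, map_smul, _root_.sub_apply, _root_.smul_apply, hPv, smul_zero, sub_zero,
    EuclideanSpace.inner_eq_star_dotProduct, ofLp_toEuclideanCLM, dotProduct_comm] at hi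

theorem sum_eigenvalues_sub_smul_one_sub_vecMulVec (hv : star v ⬝ᵥ v = 1)
    (hH : (A - (t : 𝕜) • (1 - vecMulVec v (star v))).IsHermitian) :
    ∑ i, hH.eigenvalues i = re A.trace - (Fintype.card n - 1) * t := by
  have h := congrArg re hH.trace_eq_sum_eigenvalues
  rw [trace_sub, trace_smul, trace_one_sub_vecMulVec, hv, map_sum] at h
  simpa [mul_comm] using h.symm

end SubSmulProjection

end Matrix

section SumExp

open Finset Filter Topology Real

variable {ι : Type*} [Fintype ι]

theorem Real.sum_exp_le_exp_add_card_mul_exp (μ : ι → ℝ) (k₀ : ι) {L : ℝ}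
    (hL : ∀ k, L ≤ μ k) :
    ∑ k, exp (μ k) ≤
      exp (μ k₀) + Fintype.card ι * exp (∑ k, μ k - μ k₀ - (Fintype.card ι - 2) * L) := by
  classical
  set X := ∑ k, μ k - μ k₀ - (Fintype.card ι - 2) * L
  have hX : ∀ k ≠ k₀, μ k ≤ X := by
    intro k hk
    have := sum_le_sum_of_subset_of_nonneg (subset_univ {k, k₀})
      (f := fun j => μ j - L) fun j _ _ => sub_nonneg.2 (hL j)
    rw [sum_pair hk, sum_sub_distrib, sum_const, card_univ, nsmul_eq_mul] at this
    linarith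
  rw [← add_sum_erase _ _ (mem_univ k₀)]
  gcongr
  calc ∑ k ∈ univ.erase k₀, exp (μ k) ≤ ∑ k ∈ univ.erase k₀, exp X :=
        sum_le_sum fun k hk => exp_le_exp.2 (hX k (ne_of_mem_erase hk))
    _ ≤ ∑ _k, exp X :=
        sum_le_sum_of_subset_of_nonneg (erase_subset _ _) fun _ _ _ => (exp_pos X).le
    _ = Fintype.card ι * exp X := by simp

theorem tendsto_sum_exp_of_bounds {μ : ℝ → ι → ℝ} {b : ℝ → ℝ} {a c K : ℝ}
    (hb : Tendsto b atTop (𝓝 a))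
    (hup : ∀ᶠ t in atTop, ∀ k, μ t k ≤ b t)
    (hmax : ∀ᶠ t in atTop, ∃ k, a ≤ μ t k)
    (hlow : ∀ᶠ t in atTop, ∀ k, -K - t ≤ μ t k)
    (hsum : ∀ t, ∑ k, μ t k = c - (Fintype.card ι - 1) * t) :
    Tendsto (fun t => ∑ k, exp (μ t k)) atTop (𝓝 (exp a)) := by
  set N : ℝ := (Fintype.card ι : ℝ)
  have hupper : Tendsto (fun t => exp (b t) + N * exp (c - a + (N - 2) * K - t)) atTop
      (𝓝 (exp a)) := by
    have hdecay := (tendsto_exp_atBot.comp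
      (tendsto_atBot_add_const_left _ (c - a + (N - 2) * K) tendsto_neg_atTop_atBot)).const_mul N
    simpa [sub_eq_add_neg] using ((continuous_exp.tendsto a).comp hb).add hdecay
  refine tendsto_of_tendsto_of_tendsto_of_le_of_le' tendsto_const_nhds hupper ?_ ?_
  · filter_upwards [hmax] with t ⟨k, hk⟩
    exact (exp_le_exp.2 hk).trans (single_le_sum (fun j _ => (exp_pos _).le) (mem_univ k))
  · filter_upwards [hup, hmax, hlow] with t hup ⟨k, hk⟩ hlow
    refine (sum_exp_le_exp_add_card_mul_exp _ k hlow).trans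
      (add_le_add (exp_le_exp.2 (hup k)) ?_)
    refine mul_le_mul_of_nonneg_left (exp_le_exp.2 ?_) (Nat.cast_nonneg _)
    rw [hsum]
    linarith

end SumExp

open Matrix in
/-- If `P` is an orthogonal projection with one-dimensional kernel spanned by the unit vector
`v`, then `Tr[exp(A − tP)] → exp⟨v, Av⟩` as `t → ∞`. -/
theorem trace_exp_sub_proj_tendsto {m : ℕ} (A P : Matrix (Fin m) (Fin m) ℂ)
    (hA : A.IsHermitian) (hP : P.IsHermitian) (hP2 : P * P = P)
    (v : Fin m → ℂ) (hv : star v ⬝ᵥ v = 1)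
    (hker : ∀ w : Fin m → ℂ, P.mulVec w = 0 ↔ ∃ c : ℂ, w = c • v) :
    Filter.Tendsto (fun t : ℝ => Matrix.trace (mexp (A - (t : ℂ) • P)))
      Filter.atTop (nhds (Complex.exp (star v ⬝ᵥ A.mulVec v))) := by
  obtain rfl := eq_one_sub_vecMulVec_of_ker_eq_span hP hP2 hv hker
  set K := ‖toEuclideanCLM (n := Fin m) (𝕜 := ℂ) A‖
  set a := (star v ⬝ᵥ A *ᵥ v).re
  have hH (t : ℝ) : (A - (t : ℂ) • (1 - vecMulVec v (star v))).IsHermitian :=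
    hA.sub (hP.smul (Complex.conj_ofReal t))
  have hb : Filter.Tendsto (fun t : ℝ => a + K ^ 2 / (t - K)) Filter.atTop (nhds a) := by
    simpa [sub_eq_add_neg] using tendsto_const_nhds.add
      (tendsto_const_nhds.div_atTop (Filter.tendsto_atTop_add_const_right _ (-K) Filter.tendsto_id))
  have hlim := tendsto_sum_exp_of_bounds (μ := fun t => (hH t).eigenvalues) (c := A.trace.re) hb
    ((Filter.eventually_gt_atTop K).mono fun t ht =>
      eigenvalues_sub_smul_one_sub_vecMulVec_le hv (hH t) ht)
    (.of_forall fun t => exists_le_eigenvalues_sub_smul_one_sub_vecMulVec hv (hH t))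
    ((Filter.eventually_ge_atTop 0).mono fun t ht =>
      neg_sub_le_eigenvalues_sub_smul_one_sub_vecMulVec (hH t) ht)
    (fun t => by simpa using sum_eigenvalues_sub_smul_one_sub_vecMulVec hv (hH t))
  have ha : star v ⬝ᵥ A *ᵥ v = a := (Complex.conj_eq_iff_re.mp
    (Complex.conj_eq_iff_im.mpr (hA.im_star_dotProduct_mulVec_self v))).symm
  rw [ha, ← Complex.ofReal_exp]
  refine ((Complex.continuous_ofReal.tendsto _).comp hlim).congr fun t => ?_
  simp only [Function.comp_apply, Complex.ofReal_sum, Complex.ofReal_exp, mexp, (hH t).trace_exp]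

end
end
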